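/- Let V be a finite type and f : Finset V → ℝ submodular. Fix X ⊆ V and define the modular function m_X(S) := f(X) − Σ_{v∈X\S} (f(X) − f(X \ {v})) + Σ_{v∈S\X} (f({v}) − f(∅)). Then m_X(S) ≥ f(S) for every S ⊆ V, and m_X(X) = f(X). -/

import Mathlib

/-!
Removing the elements of `X \ S` from `X` one at a time, submodularity says each removal costs
at least the loss `f X - f (X \ {v})` it causes at `X` itself; adding the elements of `S \ X`
one at a time, each addition gains at most the marginal value `f {v} - f ∅` at the empty set.
Going from `X` down to `S ∩ X` and then up to `S` gives `f S ≤ m_X(S)`.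
-/

/-- A set function `f : Finset V → ℝ` is submodular if adding an element to a smaller
set gains at least as much as adding it to a larger set:
`f(A ∪ {v}) − f(A) ≥ f(B ∪ {v}) − f(B)` for all `A ⊆ B` and `v ∉ B`. -/
def Submodular {V : Type*} [DecidableEq V] (f : Finset V → ℝ) : Prop :=
  ∀ ⦃A B : Finset V⦄, A ⊆ B → ∀ v ∉ B,
    f (insert v B) - f B ≤ f (insert v A) - f A

/-- The modular upper bound of `f` tight at `X`:
`m_X(S) = f(X) − Σ_{v∈X\S} (f(X) − f(X \ {v})) + Σ_{v∈S\X} (f({v}) − f(∅))`. -/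
noncomputable def modularUB {V : Type*} [DecidableEq V] (f : Finset V → ℝ)
    (X S : Finset V) : ℝ :=
  f X - ∑ v ∈ X \ S, (f X - f (X.erase v)) + ∑ v ∈ S \ X, (f {v} - f ∅)

namespace Submodular

variable {V : Type*} [DecidableEq V] {f : Finset V → ℝ}

theorem le_sub_sum_erase (hf : Submodular f) {X D : Finset V} (hD : D ⊆ X) :
    f (X \ D) ≤ f X - ∑ v ∈ D, (f X - f (X.erase v)) := by
  induction D using Finset.induction_on with
  | empty => simp
  | @insert a D ha ih =>
    obtain ⟨haX, hDX⟩ := Finset.insert_subset_iff.mp hD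
    have haXD : a ∈ X \ D := Finset.mem_sdiff.mpr ⟨haX, ha⟩
    have hstep := hf (Finset.erase_subset_erase a (Finset.sdiff_subset : X \ D ⊆ X)) a
      (Finset.notMem_erase a X)
    rw [Finset.insert_erase haX, Finset.insert_erase haXD] at hstep
    rw [Finset.sum_insert ha, Finset.sdiff_insert]
    linarith [ih hDX]

theorem le_add_sum_singleton (hf : Submodular f) {T E : Finset V} (hTE : Disjoint T E) :
    f (T ∪ E) ≤ f T + ∑ v ∈ E, (f {v} - f ∅) := by
  induction E using Finset.induction_on with
  | empty => simp
  | @insert a E ha ih =>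
    have haT : a ∉ T := Finset.disjoint_right.mp hTE (Finset.mem_insert_self a E)
    have hstep := hf (Finset.empty_subset (T ∪ E)) a (by simp [haT, ha])
    rw [Finset.insert_empty] at hstep
    rw [Finset.union_insert, Finset.sum_insert ha]
    linarith [ih (hTE.mono_right (Finset.subset_insert a E))]

theorem le_modularUB (hf : Submodular f) (X S : Finset V) : f S ≤ modularUB f X S := by
  have hdown : f (S ∩ X) ≤ f X - ∑ v ∈ X \ S, (f X - f (X.erase v)) := by
    simpa [sdiff_sdiff_right_self, Finset.inter_comm] using
      hf.le_sub_sum_erase (Finset.sdiff_subset : X \ S ⊆ X)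
  have hup : f S ≤ f (S ∩ X) + ∑ v ∈ S \ X, (f {v} - f ∅) := by
    conv_lhs => rw [← sup_inf_sdiff S X]
    exact hf.le_add_sum_singleton (Finset.disjoint_sdiff_inter S X).symm
  unfold modularUB
  linarith

end Submodular

theorem modularUB_self {V : Type*} [DecidableEq V] (f : Finset V → ℝ) (X : Finset V) :
    modularUB f X X = f X := by
  simp [modularUB]

theorem stmt_8_general {V : Type*} [DecidableEq V]
    (f : Finset V → ℝ) (hf : Submodular f) (X : Finset V) :
    (∀ S : Finset V, f S ≤ modularUB f X S) ∧ modularUB f X X = f X :=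
  ⟨hf.le_modularUB X, modularUB_self f X⟩

theorem stmt_8 {V : Type*} [Fintype V] [DecidableEq V]
    (f : Finset V → ℝ) (hf : Submodular f) (X : Finset V) :
    (∀ S : Finset V, f S ≤ modularUB f X S) ∧ modularUB f X X = f X :=
  stmt_8_general f hf X
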